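/- arXiv:2310.00994 — 3 statements merged into one kernel-verified Lean document; each statement's English description precedes it below -/
import Mathlib

section
/- Let K and l be natural numbers with 0 < l < K. If W is a finite collection of l-element subsets of {1,...,2K}, and N is the collection of all (l+1)-element subsets of {1,...,2K} that contain at least one member of W, then |W| ≤ |N|. -/
open Finset FinsetFamily

theorem stmt_2 (K l : ℕ) (h0 : 0 < l) (hl : l < K)
    (W : Finset (Finset (Fin (2 * K)))) (hW : ∀ S ∈ W, S.card = l) :
    W.card ≤ (Finset.univ.filter
      (fun T : Finset (Fin (2 * K)) => T.card = l + 1 ∧ ∃ S ∈ W, S ⊆ T)).card := by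
  classical
  have hcard : Fintype.card (Fin (2 * K)) = 2 * K := Fintype.card_fin _
  set Wc : Finset (Finset (Fin (2 * K))) := W.image compl with hWc
  have hWcW : Wc.card = W.card := card_image_of_injective _ compl_injective
  have hsized : (Wc : Set (Finset (Fin (2 * K)))).Sized (2 * K - l) := by
    intro U hU
    simp only [hWc, coe_image, Set.mem_image, mem_coe] at hU
    obtain ⟨S, hS, rfl⟩ := hU
    rw [card_compl, hcard, hW S hS]
  have hLYM := Finset.card_mul_le_card_shadow_mul hsized
  rw [hcard] at hLYM
  have hle : l + 1 ≤ 2 * K - l := by omega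
  have h2 : 2 * K - (2 * K - l) + 1 = l + 1 := by omega
  rw [h2] at hLYM
  have hW_le_shadow : W.card ≤ (∂ Wc).card := by
    rw [← hWcW]
    by_contra h
    push_neg at h
    have h1 : (∂ Wc).card * (l + 1) < Wc.card * (l + 1) :=
      Nat.mul_lt_mul_of_lt_of_le h (le_refl _) (by omega)
    have h2' : Wc.card * (l + 1) ≤ Wc.card * (2 * K - l) :=
      Nat.mul_le_mul_left _ hle
    omega
  refine hW_le_shadow.trans ?_
  rw [← card_image_of_injective (∂ Wc) (compl_injective
    (α := Finset (Fin (2 * K))))]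
  apply card_le_card
  intro T hT
  simp only [mem_image] at hT
  obtain ⟨U, hU, rfl⟩ := hT
  have hUcard : U.card = 2 * K - l - 1 := (Set.Sized.shadow hsized) hU
  obtain ⟨V, hV, hVsub⟩ := exists_subset_of_mem_shadow hU
  simp only [hWc, mem_image] at hV
  obtain ⟨S, hS, rfl⟩ := hV
  simp only [mem_filter, mem_univ, true_and]
  constructor
  · rw [card_compl, hcard, hUcard]; omega
  · exact ⟨S, hS, by simpa using compl_le_compl (α := Finset (Fin (2 * K))) hVsub⟩
end

section
/- For every natural number K ≥ 1 and every l with 0 < l < K, there exists an injective function ext_l from the l-element subsets of {1,...,2K} to the (l+1)-element subsets of {1,...,2K} such that S ⊆ ext_l(S) for every l-element subset S. -/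
theorem stmt_4 (K l : ℕ) (hK : 1 ≤ K) (h0 : 0 < l) (hl : l < K) :
    ∃ ext : Finset (Fin (2 * K)) → Finset (Fin (2 * K)),
      (∀ S, S.card = l → S ⊆ ext S ∧ (ext S).card = l + 1) ∧
      (∀ S S', S.card = l → S'.card = l → ext S = ext S' → S = S') := by
  classical
  let t : {S : Finset (Fin (2*K)) // S.card = l} → Finset (Finset (Fin (2*K))) :=
    fun S => (S.valᶜ).image (fun x => insert x S.val)
  have htmem : ∀ S T, T ∈ t S ↔ ∃ x, x ∉ S.val ∧ T = insert x S.val := by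
    intro S T
    simp only [t, Finset.mem_image, Finset.mem_compl, eq_comm]
  have htsub : ∀ S, ∀ T ∈ t S, S.val ⊆ T ∧ T.card = l + 1 := by
    intro S T hT
    obtain ⟨x, hx, rfl⟩ := (htmem S T).1 hT
    exact ⟨Finset.subset_insert _ _, by rw [Finset.card_insert_of_notMem hx, S.2]⟩
  have htcard : ∀ S, (t S).card = 2 * K - l := by
    intro S
    have hinj : (t S).card = S.valᶜ.card := by
      apply Finset.card_image_of_injOn
      intro x hx y hy hxy
      simp only [Finset.coe_compl, Set.mem_compl_iff, Finset.mem_coe] at hx hy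
      have hxy' : insert x S.val = insert y S.val := hxy
      have hx' : x ∈ insert y S.val := hxy' ▸ Finset.mem_insert_self x S.val
      rcases Finset.mem_insert.1 hx' with h | h
      · exact h
      · exact absurd h hx
    rw [hinj, Finset.card_compl, Fintype.card_fin, S.2]
  have hle : l + 1 ≤ 2 * K - l := by omega
  have hall : ∀ A : Finset {S : Finset (Fin (2*K)) // S.card = l},
      A.card ≤ (A.biUnion t).card := by
    intro A
    have key := Finset.card_mul_le_card_mul (fun S T => T ∈ t S)
      (s := A) (t := A.biUnion t) (m := 2*K - l) (n := l+1) ?_ ?_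
    · have h2 : (A.biUnion t).card * (l+1) ≤ (A.biUnion t).card * (2*K - l) :=
        Nat.mul_le_mul_left _ hle
      have h3 : A.card * (2*K - l) ≤ (A.biUnion t).card * (2*K - l) := key.trans h2
      have hpos : 0 < 2*K - l := by omega
      exact Nat.le_of_mul_le_mul_right h3 hpos
    · intro S hS
      have heq : Finset.bipartiteAbove (fun S T => T ∈ t S) (A.biUnion t) S = t S := by
        ext T
        simp only [Finset.bipartiteAbove, Finset.mem_filter, Finset.mem_biUnion]
        exact ⟨fun h => h.2, fun h => ⟨⟨S, hS, h⟩, h⟩⟩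
      rw [heq, htcard]
    · intro T hT
      obtain ⟨S₀, _, hTS₀⟩ := Finset.mem_biUnion.1 hT
      have hTcard : T.card = l + 1 := (htsub S₀ T hTS₀).2
      have : (Finset.bipartiteBelow (fun S T => T ∈ t S) A T).card ≤
          (T.image (fun x => T.erase x)).card := by
        apply Finset.card_le_card_of_injOn (fun S => S.val)
        · intro S hS
          simp only [Finset.bipartiteBelow, Finset.mem_coe, Finset.mem_filter] at hS
          obtain ⟨x, hx, rfl⟩ := (htmem S T).1 hS.2
          refine Finset.mem_coe.2 (Finset.mem_image.2 ⟨x, Finset.mem_insert_self x S.val, ?_⟩)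
          rw [Finset.erase_insert hx]
        · intro a _ b _ hab
          exact Subtype.ext hab
      calc (Finset.bipartiteBelow (fun S T => T ∈ t S) A T).card
          ≤ (T.image (fun x => T.erase x)).card := this
        _ ≤ T.card := Finset.card_image_le
        _ = l + 1 := hTcard
  obtain ⟨f, hfinj, hf⟩ := (Finset.all_card_le_biUnion_card_iff_existsInjective' t).1 hall
  refine ⟨fun S => if h : S.card = l then f ⟨S, h⟩ else ∅, ?_, ?_⟩
  · intro S hS
    simp only [dif_pos hS]
    exact htsub ⟨S, hS⟩ _ (hf ⟨S, hS⟩)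
  · intro S S' h h' heq
    simp only [dif_pos h, dif_pos h'] at heq
    exact congrArg Subtype.val (hfinj heq)
end

section
/- Let M be a set, S ⊆ M, R ⊆ M × M × M, and suppose f : M → M satisfies: for all x, ¬S (f x), and for all x and all z ∈ M, R x (f x) z and (x = z ∨ ¬R z (f x) x). Then f is injective. -/
theorem stmt_9 (M : Type*) (S : M → Prop) (R : M → M → M → Prop) (f : M → M)
    (h1 : ∀ x, ¬ S (f x))
    (h2 : ∀ x z, R x (f x) z ∧ (x = z ∨ ¬ R z (f x) x)) :
    Function.Injective f := by
  intro a b hab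
  obtain ⟨hR, hor⟩ := h2 a b
  rcases hor with h | h
  · exact h
  · obtain ⟨hR', _⟩ := h2 b a
    rw [← hab] at hR'
    exact absurd hR' h
end
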